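/- arXiv:1602.03110 — 2 statements merged into one kernel-verified Lean document; each statement's English description precedes it below -/
import Mathlib

section
/- Given a path u_0, ..., u_l with edge parameters θ_j (influence probabilities) and ψ_j = (2φ_j - 1)/2, and node opinions o_j, the OSIM score Δ^l(u_0) = Σ_{i=1}^{l} [ or_i(u_0)/2 + sc_i(u_0)/2 + o_0 · α_i(u_0)/2 ] equals the expected effective opinion spread σ^o({u_0}) = Σ_{i=1}^{l} ( Π_{j=1}^{i} θ_{j-1} ) · ( Σ_{j=1}^{i} (o_j/2) Π_{k=1}^{i-j} ψ_{i-k} + o_0 Π_{k=1}^{i} ψ_{i-k} ), where or, sc, α satisfy the OSIM recursions: or_0(u_k) = o_k, or_i(u_k) = θ_k or_{i-1}(u_{k+1}); α_0(u_k) = 1, α_i(u_k) = θ_k ψ_k α_{i-1}(u_{k+1}); sc_0(u_k) = 0, sc_i(u_k) = θ_k sc_{i-1}(u_{k+1}) + o_k α_i(u_k). -/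
/-!
Unrolling the recursions along the path gives closed forms that share the factor
`Θ_i = θ_0 ⋯ θ_{i-1}`: `or_i = Θ_i o_i`, `α_i = Θ_i ψ_0 ⋯ ψ_{i-1}` and
`sc_i = Θ_i Σ_{m<i} o_m ψ_m ⋯ ψ_{i-1}`. Once the reversed `ψ`-products of `σ^o` are read
as `ψ_j ⋯ ψ_{i-1}`, the two sides agree summand by summand: `or_i` is the `j = i` term of
`σ^o`, and the `m = 0` term of `sc_i` together with `o_0 α_i` gives `o_0 ψ_0 ⋯ ψ_{i-1}`.
-/

open Finset

section Unrolling

variable {R : Type*} [CommSemiring R]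

theorem eq_prod_Ico_mul_of_succ_eq_mul (f : ℕ → ℕ → R) (a c : ℕ → R)
    (h0 : ∀ k, f 0 k = c k) (hsucc : ∀ i k, f (i + 1) k = a k * f i (k + 1)) (i k : ℕ) :
    f i k = (∏ j ∈ Ico k (k + i), a j) * c (k + i) := by
  induction i generalizing k with
  | zero => simp [h0]
  | succ i ih =>
    rw [hsucc, ih, prod_eq_prod_Ico_succ_bot (show k < k + (i + 1) by omega),
      show k + 1 + i = k + (i + 1) by omega, mul_assoc]

theorem eq_prod_Ico_mul_sum_of_succ_eq (s : ℕ → ℕ → R) (o θ ψ : ℕ → R)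
    (h0 : ∀ k, s 0 k = 0)
    (hsucc : ∀ i k, s (i + 1) k =
      θ k * s i (k + 1) + o k * ∏ j ∈ Ico k (k + (i + 1)), θ j * ψ j) (i k : ℕ) :
    s i k =
      (∏ j ∈ Ico k (k + i), θ j) * ∑ m ∈ Ico k (k + i), o m * ∏ j ∈ Ico m (k + i), ψ j := by
  induction i generalizing k with
  | zero => simp [h0]
  | succ i ih =>
    have hk : k < k + (i + 1) := by omega
    rw [hsucc, ih, prod_mul_distrib, prod_eq_prod_Ico_succ_bot hk, sum_eq_sum_Ico_succ_bot hk,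
      show k + 1 + i = k + (i + 1) by omega]
    ring

end Unrolling

theorem prod_Icc_one_sub_eq_prod_Ico {M : Type*} [CommMonoid M] (f : ℕ → M) {j i : ℕ}
    (h : j ≤ i) : ∏ k ∈ Icc 1 (i - j), f (i - k) = ∏ k ∈ Ico j i, f k := by
  rw [← Ico_add_one_right_eq_Icc, prod_Ico_reflect f 1 (by omega),
    show i + 1 - (i - j + 1) = j by omega, Nat.add_sub_cancel]

theorem prod_Icc_one_sub_one_eq_prod_Ico_zero {M : Type*} [CommMonoid M] (f : ℕ → M) (i : ℕ) :
    ∏ j ∈ Icc 1 i, f (j - 1) = ∏ j ∈ Ico 0 i, f j := by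
  rw [← Ico_add_one_right_eq_Icc, prod_Ico_eq_prod_range, prod_Ico_eq_prod_range]
  simp [add_comm]

theorem sum_Ico_add_eq_add_sum_Icc_one {M : Type*} [AddCommMonoid M] (f : ℕ → M) (i : ℕ) :
    ∑ m ∈ Ico 0 i, f m + f i = f 0 + ∑ j ∈ Icc 1 i, f j := by
  rw [sum_Ico_add_eq_sum_Icc (Nat.zero_le i), ← add_sum_Ioc_eq_sum_Icc (Nat.zero_le i)]
  rfl

/-- The OSIM score of the start of a path equals the expected effective opinion spread:
with the OSIM recursions for `orr`, `al`, `sc`,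
`Δ^l(u_0) = Σ_{i=1}^{l} (orr_i(u_0) + sc_i(u_0) + o_0·al_i(u_0))/2` equals
`σ^o({u_0}) = Σ_{i=1}^{l} (Π_{j=1}^{i} θ_{j-1}) ·
   (Σ_{j=1}^{i} (o_j/2) Π_{k=1}^{i-j} ψ_{i-k} + o_0 Π_{k=1}^{i} ψ_{i-k})`. -/
theorem stmt4 (l : ℕ) (o θ ψ : ℕ → ℝ) (orr al sc : ℕ → ℕ → ℝ)
    (hor0 : ∀ k, orr 0 k = o k)
    (hor : ∀ i k, orr (i + 1) k = θ k * orr i (k + 1))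
    (hal0 : ∀ k, al 0 k = 1)
    (hal : ∀ i k, al (i + 1) k = θ k * ψ k * al i (k + 1))
    (hsc0 : ∀ k, sc 0 k = 0)
    (hsc : ∀ i k, sc (i + 1) k = θ k * sc i (k + 1) + o k * al (i + 1) k) :
    ∑ i ∈ Finset.Icc 1 l, (orr i 0 / 2 + sc i 0 / 2 + o 0 * al i 0 / 2)
      = ∑ i ∈ Finset.Icc 1 l, (∏ j ∈ Finset.Icc 1 i, θ (j - 1)) *
          ((∑ j ∈ Finset.Icc 1 i, (o j / 2) * ∏ k ∈ Finset.Icc 1 (i - j), ψ (i - k))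
            + o 0 * ∏ k ∈ Finset.Icc 1 i, ψ (i - k)) := by
  have horr_eq := eq_prod_Ico_mul_of_succ_eq_mul orr θ o hor0 hor
  have hal_eq (i k : ℕ) : al i k = ∏ j ∈ Ico k (k + i), θ j * ψ j := by
    simpa using eq_prod_Ico_mul_of_succ_eq_mul al (fun k => θ k * ψ k) 1 hal0 hal i k
  have hsc_eq := eq_prod_Ico_mul_sum_of_succ_eq sc o θ ψ hsc0 fun i k => by rw [hsc, hal_eq]
  refine sum_congr rfl fun i _ => ?_
  have hψ (j : ℕ) (hj : j ∈ Icc 1 i) :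
      o j / 2 * ∏ k ∈ Icc 1 (i - j), ψ (i - k) = o j * (∏ k ∈ Ico j i, ψ k) / 2 := by
    rw [prod_Icc_one_sub_eq_prod_Ico ψ (mem_Icc.1 hj).2, mul_div_right_comm]
  have hψ0 : ∏ k ∈ Icc 1 i, ψ (i - k) = ∏ k ∈ Ico 0 i, ψ k := by
    simpa using prod_Icc_one_sub_eq_prod_Ico ψ (Nat.zero_le i)
  have hsplit := sum_Ico_add_eq_add_sum_Icc_one (fun j => o j * ∏ k ∈ Ico j i, ψ k) i
  rw [sum_congr rfl hψ, ← sum_div, horr_eq, hal_eq, hsc_eq, prod_mul_distrib,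
    prod_Icc_one_sub_one_eq_prod_Ico_zero, hψ0]
  simp only [zero_add, Ico_self, prod_empty, mul_one] at hsplit ⊢
  linear_combination (∏ j ∈ Ico 0 i, θ j) / 2 * hsplit
end

section
/- Let f : Finset V → ℝ be monotone, submodular, with f(∅)=0, and let S_k be the output of the greedy algorithm (iteratively adding an element of maximum marginal gain). Then f(S_k) ≥ (1 - (1 - 1/k)^k) · max_{|T| ≤ k} f(T) ≥ (1 - 1/e) · max_{|T| ≤ k} f(T). -/
lemma stmt7_aux {V : Type*} [DecidableEq V]
    (f : Finset V → ℝ)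
    (hsub : ∀ S T : Finset V, S ⊆ T → ∀ x : V,
      f (insert x S) - f S ≥ f (insert x T) - f T)
    (A : Finset V) :
    ∀ T : Finset V, f (A ∪ T) - f A ≤ ∑ v ∈ T, (f (insert v A) - f A) := by
  intro T
  induction T using Finset.induction_on with
  | empty => simp
  | @insert a T' ha ih =>
    rw [Finset.union_insert, Finset.sum_insert ha]
    have h1 := hsub A (A ∪ T') Finset.subset_union_left a
    linarith

/-- Nemhauser–Wolsey–Fisher: greedy maximization of a monotone submodular function `f`
with `f ∅ = 0` under a cardinality constraint `k` satisfies
`f (S_k) ≥ (1 - (1 - 1/k)^k)·max_{|T| ≤ k} f T ≥ (1 - 1/e)·max_{|T| ≤ k} f T`. -/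
theorem stmt7 {V : Type*} [Fintype V] [Nonempty V] [DecidableEq V]
    (f : Finset V → ℝ)
    (hmono : ∀ S T : Finset V, S ⊆ T → f S ≤ f T)
    (hsub : ∀ S T : Finset V, S ⊆ T → ∀ x : V,
      f (insert x S) - f S ≥ f (insert x T) - f T)
    (hempty : f ∅ = 0)
    (S : ℕ → Finset V) (hS0 : S 0 = ∅)
    (hS : ∀ i, ∃ u : V,
      (∀ v : V, f (insert v (S i)) - f (S i) ≤ f (insert u (S i)) - f (S i)) ∧
      S (i + 1) = insert u (S i))
    (k : ℕ) (hk : 1 ≤ k) :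
    ∀ T : Finset V, T.card ≤ k →
      (1 - (1 - 1 / (k : ℝ)) ^ k) * f T ≤ f (S k) ∧
      (1 - 1 / Real.exp 1) * f T ≤ (1 - (1 - 1 / (k : ℝ)) ^ k) * f T := by
  intro T hT
  have hk0 : (0:ℝ) < (k:ℝ) := by exact_mod_cast hk
  have hT0 : (0:ℝ) ≤ f T := by
    have := hmono ∅ T (Finset.empty_subset T); linarith [hempty ▸ this]
  set r : ℝ := 1 - 1 / (k:ℝ) with hr
  have hr0 : 0 ≤ r := by
    have h : 1 / (k:ℝ) ≤ 1 := by
      rw [div_le_one hk0]; exact_mod_cast hk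
    rw [hr]; linarith
  -- key step
  have key : ∀ i, f T - f (S (i+1)) ≤ r * (f T - f (S i)) := by
    intro i
    obtain ⟨u, hu, hSi⟩ := hS i
    set δ : ℝ := f (S (i+1)) - f (S i) with hδ
    have hδ0 : 0 ≤ δ := by
      rw [hδ, hSi]
      have := hmono (S i) (insert u (S i)) (Finset.subset_insert u (S i))
      linarith
    have hgain : f T - f (S i) ≤ (k:ℝ) * δ := by
      have h1 : f T ≤ f (S i ∪ T) := hmono T _ Finset.subset_union_right
      have h2 := stmt7_aux f hsub (S i) T
      have h3 : ∑ v ∈ T, (f (insert v (S i)) - f (S i)) ≤ ∑ _v ∈ T, δ := by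
        apply Finset.sum_le_sum
        intro v _
        have := hu v
        rw [hδ, hSi]; linarith
      have h4 : ∑ _v ∈ T, δ = (T.card : ℝ) * δ := by
        rw [Finset.sum_const, nsmul_eq_mul]
      have h5 : (T.card : ℝ) * δ ≤ (k:ℝ) * δ := by
        apply mul_le_mul_of_nonneg_right _ hδ0
        exact_mod_cast hT
      linarith
    have hδge : (f T - f (S i)) / (k:ℝ) ≤ δ := by
      rw [div_le_iff₀ hk0]; linarith [mul_comm (k:ℝ) δ]
    have : f T - f (S (i+1)) = (f T - f (S i)) - δ := by rw [hδ]; ring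
    rw [this, hr]
    have hexp : (1 - 1/(k:ℝ)) * (f T - f (S i))
        = (f T - f (S i)) - (f T - f (S i)) / (k:ℝ) := by
      field_simp
    linarith
  have geom : ∀ n, f T - f (S n) ≤ r ^ n * f T := by
    intro n
    induction n with
    | zero => simp [hS0, hempty]
    | succ n ih =>
      calc f T - f (S (n+1)) ≤ r * (f T - f (S n)) := key n
        _ ≤ r * (r ^ n * f T) := mul_le_mul_of_nonneg_left ih hr0
        _ = r ^ (n+1) * f T := by ring
  constructor
  · have := geom k
    have h1 : (1 - r ^ k) * f T = f T - r ^ k * f T := by ring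
    linarith
  · have h2 : r ≤ Real.exp (-(1/(k:ℝ))) := by
      have := Real.add_one_le_exp (-(1/(k:ℝ)))
      rw [hr]; linarith
    have h3 : r ^ k ≤ Real.exp (-(1/(k:ℝ))) ^ k := pow_le_pow_left₀ hr0 h2 k
    have h4 : Real.exp (-(1/(k:ℝ))) ^ k = Real.exp (-1) := by
      rw [← Real.exp_nat_mul]
      congr 1
      field_simp
    have h5 : Real.exp (-1) = 1 / Real.exp 1 := by
      rw [Real.exp_neg]; exact (one_div _).symm
    have h6 : r ^ k ≤ 1 / Real.exp 1 := by rw [← h5, ← h4]; exact h3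
    apply mul_le_mul_of_nonneg_right _ hT0
    linarith
end
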